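/- With v_1, v_2, v_3 defined by the recursive Mex algorithm, for every n ≥ 1 the maximum element of D_n equals v_3(n) - v_1(n). -/

import Mathlib

/-- Minimum excluded value of a set of natural numbers. -/
noncomputable def mex (S : Set ℕ) : ℕ := sInf {m : ℕ | m ∉ S}

/-- Coordinates of a set of triples. -/
def coords (G : Set (ℕ × ℕ × ℕ)) : Set ℕ :=
  {k | ∃ x ∈ G, k = x.1 ∨ k = x.2.1 ∨ k = x.2.2}

/-- Pairwise coordinate differences of a set of triples. -/
def diffs (G : Set (ℕ × ℕ × ℕ)) : Set ℕ :=
  {d | ∃ x ∈ G, d = x.2.1 - x.1 ∨ d = x.2.2 - x.2.1 ∨ d = x.2.2 - x.1}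

/-- One step of the Mex algorithm: the next P-position. -/
noncomputable def step (G : Set (ℕ × ℕ × ℕ)) : ℕ × ℕ × ℕ :=
  let F := coords G
  let D := diffs G
  let a := mex F
  let b := mex ((fun d => a + d) '' D ∪ Set.Icc 1 a ∪ F)
  let c := mex ((fun d => b + d) '' D ∪ Set.Icc 1 b ∪ F)
  (a, b, c)

/-- The sets `G_n` of P-positions computed by the Mex algorithm. -/
noncomputable def Gset : ℕ → Set (ℕ × ℕ × ℕ)
  | 0 => {(0, 0, 0)}
  | n + 1 => Gset n ∪ {step (Gset n)}

/-- The `n`-th P-position `(v_1(n), v_2(n), v_3(n))`. -/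
noncomputable def v : ℕ → ℕ × ℕ × ℕ
  | 0 => (0, 0, 0)
  | n + 1 => step (Gset n)

noncomputable def v1 (n : ℕ) : ℕ := (v n).1
noncomputable def v2 (n : ℕ) : ℕ := (v n).2.1
noncomputable def v3 (n : ℕ) : ℕ := (v n).2.2

/-- `F_n`: the set of coordinates of elements of `G_n`. -/
noncomputable def Fset (n : ℕ) : Set ℕ := coords (Gset n)

/-- `D_n`: the set of pairwise coordinate differences over `G_n`. -/
noncomputable def Dset (n : ℕ) : Set ℕ := diffs (Gset n)

/-!
Write `K = mex D_n`. As `0 ∈ F_n` and `[0, K) ⊆ D_n`, every number below `x + K` is forbidden when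
taking the mex with offset `x`, so `v_2(n+1) ≥ v_1(n+1) + K` and `v_3(n+1) ≥ v_2(n+1) + K`; since
`F_n` lies below `v_3(n) < v_2(n+1) + K`, in fact `v_3(n+1) = v_2(n+1) + K`. The new differences
are therefore `v_2 - v_1`, `K` and `v_3 - v_1 = (v_2 - v_1) + K ≥ 2K`, and the last one beats every
old difference as long as `v_3(n) - v_1(n) + 2 ≤ 2K`. This bound survives the step because
`v_2(n+1) - v_1(n+1) < mex D_{n+1}`: all numbers between `K` and `v_2 - v_1` lie in `D_n`, which
follows from the large elements of `D_n` being 2-separated and those of `F_n` 3-separated, two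
properties that are themselves carried along by the induction.
-/

lemma mex_notMem {S : Set ℕ} (hS : S.Finite) : mex S ∉ S :=
  Nat.sInf_mem (s := Sᶜ) hS.infinite_compl.nonempty

lemma mem_of_lt_mex {S : Set ℕ} {m : ℕ} (h : m < mex S) : m ∈ S :=
  not_not.mp (Nat.notMem_of_lt_sInf h)

lemma mex_le_of_notMem {S : Set ℕ} {m : ℕ} (h : m ∉ S) : mex S ≤ m := Nat.sInf_le h

lemma lt_mex_iff {S : Set ℕ} (hS : S.Finite) {k : ℕ} : k < mex S ↔ ∀ m ≤ k, m ∈ S := by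
  refine ⟨fun h m hm => mem_of_lt_mex (hm.trans_lt h), fun h => ?_⟩
  by_contra! hle
  exact mex_notMem hS (h _ hle)

lemma mex_pos {S : Set ℕ} (hS : S.Finite) (h0 : 0 ∈ S) : 0 < mex S :=
  (lt_mex_iff hS).2 fun _ hm => by rwa [Nat.le_zero.1 hm]

lemma mex_lt_mex_of_subset_of_mem {S T : Set ℕ} (hT : T.Finite) (hST : S ⊆ T) (hmem : mex S ∈ T) :
    mex S < mex T :=
  (lt_mex_iff hT).2 fun _ hm => hm.lt_or_eq.elim (fun h => hST (mem_of_lt_mex h)) (· ▸ hmem)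

/-- The set whose mex is taken for `v_2` (with `x = v_1`) and for `v_3` (with `x = v_2`). -/
def forbidden (x : ℕ) (D F : Set ℕ) : Set ℕ := (fun d => x + d) '' D ∪ Set.Icc 1 x ∪ F

def SeparatedAbove (S : Set ℕ) (t gap : ℕ) : Prop :=
  ∀ x ∈ S, ∀ y ∈ S, t ≤ x → x < y → x + gap ≤ y

section forbidden

variable {x m : ℕ} {D F : Set ℕ}

lemma forbidden_finite (hD : D.Finite) (hF : F.Finite) : (forbidden x D F).Finite :=
  ((hD.image _).union (Set.finite_Icc 1 x)).union hF

lemma add_mem_forbidden_iff (hm : 0 < m) : x + m ∈ forbidden x D F ↔ m ∈ D ∨ x + m ∈ F := by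
  simp only [forbidden, Set.mem_union, Set.mem_image, Set.mem_Icc, add_right_inj, exists_eq_right,
    show ¬x + m ≤ x by omega, and_false, or_false]

lemma mem_forbidden_of_lt_add_mex (h0F : 0 ∈ F) (hm : m < x + mex D) : m ∈ forbidden x D F := by
  rcases Nat.eq_zero_or_pos m with rfl | hm0
  · exact Or.inr h0F
  rcases le_or_gt m x with hmx | hxm
  · exact Or.inl (Or.inr ⟨hm0, hmx⟩)
  · obtain ⟨d, rfl⟩ : ∃ d, m = x + d := ⟨m - x, by omega⟩
    exact (add_mem_forbidden_iff (by omega)).2 (Or.inl (mem_of_lt_mex (S := D) (by omega)))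

lemma add_mex_le_mex_forbidden (hD : D.Finite) (hF : F.Finite) (h0F : 0 ∈ F) :
    x + mex D ≤ mex (forbidden x D F) := by
  by_contra! h
  exact mex_notMem (forbidden_finite hD hF) (mem_forbidden_of_lt_add_mex h0F h)

lemma mex_forbidden_eq_add_mex (hD : D.Finite) (hF : F.Finite) (h0D : 0 ∈ D) (h0F : 0 ∈ F)
    (h : x + mex D ∉ F) : mex (forbidden x D F) = x + mex D := by
  refine le_antisymm (mex_le_of_notMem ?_) (add_mex_le_mex_forbidden hD hF h0F)
  rw [add_mem_forbidden_iff (mex_pos hD h0D)]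
  exact not_or.2 ⟨mex_notMem hD, h⟩

/-- If `x + mex D` and `x + m` were both in `F`, then `x + mex D + 1` and `x + mex D + 2` would
not be, so `mex D + 1` and `mex D + 2` would both lie in `D`. -/
lemma mem_of_add_lt_mex_forbidden (hD : D.Finite) (h0D : 0 ∈ D)
    (hDsep : SeparatedAbove D (mex D + 1) 2) (hFsep : SeparatedAbove F (x + mex D) 3)
    (hm : mex D < m) (hlt : x + m < mex (forbidden x D F)) : m ∈ D := by
  set K := mex D
  have hK : 0 < K := mex_pos hD h0D
  have below : ∀ k, 0 < k → x + k < mex (forbidden x D F) → k ∈ D ∨ x + k ∈ F := fun k hk hlt =>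
    (add_mem_forbidden_iff hk).1 (mem_of_lt_mex hlt)
  by_contra hmD
  have hmF := (below m (by omega) hlt).resolve_left hmD
  have hKF := (below K hK (by omega)).resolve_left (mex_notMem hD)
  have hgap := hFsep _ hKF _ hmF le_rfl (by omega)
  have notF : ∀ i, 0 < i → i < 3 → x + K + i ∉ F := fun i hi0 hi3 hiF => by
    have := hFsep _ hKF _ hiF le_rfl (by omega)
    omega
  have h1 := (below (K + 1) (by omega) (by omega)).resolve_right
    (by simpa only [add_assoc] using notF 1 one_pos (by norm_num))
  have h2 := (below (K + 2) (by omega) (by omega)).resolve_right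
    (by simpa only [add_assoc] using notF 2 two_pos (by norm_num))
  have := hDsep _ h1 _ h2 le_rfl (by omega)
  omega

end forbidden

lemma coords_union_singleton (G : Set (ℕ × ℕ × ℕ)) (x : ℕ × ℕ × ℕ) :
    coords (G ∪ {x}) = coords G ∪ {x.1, x.2.1, x.2.2} := by
  ext k
  simp [coords, or_and_right, exists_or, or_assoc]

lemma diffs_union_singleton (G : Set (ℕ × ℕ × ℕ)) (x : ℕ × ℕ × ℕ) :
    diffs (G ∪ {x}) = diffs G ∪ {x.2.1 - x.1, x.2.2 - x.2.1, x.2.2 - x.1} := by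
  ext k
  simp [diffs, or_and_right, exists_or, or_assoc]

lemma Fset_zero : Fset 0 = {0} := by
  ext k
  simp [Fset, coords, Gset]

lemma Dset_zero : Dset 0 = {0} := by
  ext k
  simp [Dset, diffs, Gset]

lemma Fset_succ (n : ℕ) : Fset (n + 1) = Fset n ∪ {v1 (n + 1), v2 (n + 1), v3 (n + 1)} :=
  coords_union_singleton _ _

lemma Dset_succ (n : ℕ) : Dset (n + 1) =
    Dset n ∪ {v2 (n + 1) - v1 (n + 1), v3 (n + 1) - v2 (n + 1), v3 (n + 1) - v1 (n + 1)} :=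
  diffs_union_singleton _ _

lemma Fset_subset_succ (n : ℕ) : Fset n ⊆ Fset (n + 1) := by
  rw [Fset_succ]; exact Set.subset_union_left

lemma Dset_subset_succ (n : ℕ) : Dset n ⊆ Dset (n + 1) := by
  rw [Dset_succ]; exact Set.subset_union_left

lemma Fset_finite (n : ℕ) : (Fset n).Finite := by
  induction n with
  | zero => simp [Fset_zero]
  | succ n ih => rw [Fset_succ]; exact ih.union (Set.toFinite _)

lemma Dset_finite (n : ℕ) : (Dset n).Finite := by
  induction n with
  | zero => simp [Dset_zero]
  | succ n ih => rw [Dset_succ]; exact ih.union (Set.toFinite _)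

lemma zero_mem_Fset (n : ℕ) : 0 ∈ Fset n := by
  induction n with
  | zero => simp [Fset_zero]
  | succ n ih => exact Fset_subset_succ n ih

lemma zero_mem_Dset (n : ℕ) : 0 ∈ Dset n := by
  induction n with
  | zero => simp [Dset_zero]
  | succ n ih => exact Dset_subset_succ n ih

lemma v2_succ (n : ℕ) : v2 (n + 1) = mex (forbidden (v1 (n + 1)) (Dset n) (Fset n)) := rfl

lemma Iic_v1_subset_Fset (n : ℕ) : Set.Iic (v1 n) ⊆ Fset n := by
  cases n with
  | zero => intro m hm; obtain rfl : m = 0 := Nat.le_zero.1 hm; exact zero_mem_Fset 0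
  | succ n =>
    intro m hm
    rcases (Set.mem_Iic.1 hm).lt_or_eq with hlt | rfl
    · exact Fset_subset_succ n (mem_of_lt_mex hlt)
    · rw [Fset_succ]; simp

lemma v1_lt_v1_succ (n : ℕ) : v1 n < v1 (n + 1) :=
  (lt_mex_iff (Fset_finite n)).2 fun _ hm => Iic_v1_subset_Fset n hm

lemma v2_succ_ge (n : ℕ) : v1 (n + 1) + mex (Dset n) ≤ v2 (n + 1) :=
  add_mex_le_mex_forbidden (Dset_finite n) (Fset_finite n) (zero_mem_Fset n)

/-- In `Fset_separated`, the coordinates above `v1 (n + 1) + mex (Dset n)` are all `v3`-values,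
which grow by at least 3 per step. -/
structure Invariant (n : ℕ) : Prop where
  Fset_le : ∀ x ∈ Fset n, x ≤ v3 n
  isGreatest_Dset : IsGreatest (Dset n) (v3 n - v1 n)
  width_le : v3 n - v1 n + 2 ≤ 2 * mex (Dset n)
  Dset_separated : SeparatedAbove (Dset n) (mex (Dset n) + 1) 2
  Fset_separated : SeparatedAbove (Fset n) (v1 (n + 1) + mex (Dset n)) 3

lemma Invariant.zero : Invariant 0 := by
  refine ⟨?_, ?_, ?_, ?_, ?_⟩
  · simp [Fset_zero, v3]
  · simp [Dset_zero, v3, v1, v, isGreatest_singleton]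
  · show 0 + 2 ≤ 2 * mex (Dset 0)
    have := mex_pos (Dset_finite 0) (zero_mem_Dset 0)
    omega
  · simp [SeparatedAbove, Dset_zero]
  · simp [SeparatedAbove, Fset_zero]

namespace Invariant

variable {n : ℕ} (h : Invariant n)
include h

lemma v3_add_three_le : v3 n + 3 ≤ v1 (n + 1) + 2 * mex (Dset n) := by
  have := h.Fset_le _ (Iic_v1_subset_Fset n (Set.mem_Iic.2 le_rfl))
  have := h.width_le
  have := v1_lt_v1_succ n
  omega

lemma v3_succ_eq : v3 (n + 1) = v2 (n + 1) + mex (Dset n) :=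
  mex_forbidden_eq_add_mex (x := v2 (n + 1)) (D := Dset n) (F := Fset n)
    (Dset_finite n) (Fset_finite n) (zero_mem_Dset n) (zero_mem_Fset n) fun hF => by
    have := h.Fset_le _ hF
    have := h.v3_add_three_le
    have := v2_succ_ge n
    omega

lemma v3_add_three_le_v3_succ : v3 n + 3 ≤ v3 (n + 1) := by
  have := h.v3_add_three_le
  have := h.v3_succ_eq
  have := v2_succ_ge n
  omega

lemma mex_Dset_lt_succ : mex (Dset n) < mex (Dset (n + 1)) :=
  mex_lt_mex_of_subset_of_mem (Dset_finite _) (Dset_subset_succ n)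
    (by rw [Dset_succ, h.v3_succ_eq]; simp)

lemma v2_succ_lt : v2 (n + 1) < v1 (n + 1) + mex (Dset (n + 1)) := by
  suffices v2 (n + 1) - v1 (n + 1) < mex (Dset (n + 1)) by omega
  refine (lt_mex_iff (Dset_finite _)).2 fun m hm => ?_
  have := v2_succ_ge n
  rcases lt_trichotomy m (mex (Dset n)) with hlt | rfl | hgt
  · exact Dset_subset_succ n (mem_of_lt_mex hlt)
  · rw [Dset_succ, h.v3_succ_eq]; simp
  rcases hm.lt_or_eq with hlt | rfl
  · exact Dset_subset_succ n <| mem_of_add_lt_mex_forbidden (Dset_finite n) (zero_mem_Dset n)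
      h.Dset_separated h.Fset_separated hgt (by rw [← v2_succ]; omega)
  · rw [Dset_succ]; simp

lemma Fset_le_succ : ∀ x ∈ Fset (n + 1), x ≤ v3 (n + 1) := by
  intro x hx
  rw [Fset_succ] at hx
  have := v2_succ_ge n
  have := h.v3_succ_eq
  have := h.v3_add_three_le_v3_succ
  rcases hx with hx | hx
  · have := h.Fset_le x hx
    omega
  · simp only [Set.mem_insert_iff, Set.mem_singleton_iff] at hx
    omega

lemma isGreatest_Dset_succ : IsGreatest (Dset (n + 1)) (v3 (n + 1) - v1 (n + 1)) := by
  refine ⟨by rw [Dset_succ]; simp, fun d hd => ?_⟩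
  rw [Dset_succ] at hd
  have := v2_succ_ge n
  have := h.v3_succ_eq
  rcases hd with hd | hd
  · have := h.isGreatest_Dset.2 hd
    have := h.width_le
    omega
  · simp only [Set.mem_insert_iff, Set.mem_singleton_iff] at hd
    omega

lemma Dset_separated_succ : SeparatedAbove (Dset (n + 1)) (mex (Dset (n + 1)) + 1) 2 := by
  intro d hd e he hd_gt hde
  have := h.isGreatest_Dset_succ.2 he
  have := h.v3_succ_eq
  have := h.v2_succ_lt
  have := h.mex_Dset_lt_succ
  have := v2_succ_ge n
  rw [Dset_succ] at hd he
  simp only [Set.mem_union, Set.mem_insert_iff, Set.mem_singleton_iff] at hd he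
  have hd : d ∈ Dset n := hd.resolve_right (by omega)
  have := h.isGreatest_Dset.2 hd
  have := h.width_le
  rcases he with he | he
  · exact h.Dset_separated d hd e he (by omega) hde
  · omega

lemma Fset_separated_succ :
    SeparatedAbove (Fset (n + 1)) (v1 (n + 1 + 1) + mex (Dset (n + 1))) 3 := by
  intro x hx y hy hx_ge hxy
  have := h.Fset_le_succ y hy
  have := h.v3_add_three_le_v3_succ
  have := h.v2_succ_lt
  have := h.mex_Dset_lt_succ
  have := v1_lt_v1_succ (n + 1)
  rw [Fset_succ] at hx hy
  simp only [Set.mem_union, Set.mem_insert_iff, Set.mem_singleton_iff] at hx hy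
  have hx : x ∈ Fset n := hx.resolve_right (by omega)
  have := h.Fset_le x hx
  rcases hy with hy | hy
  · exact h.Fset_separated x hx y hy (by omega) hxy
  · omega

lemma succ : Invariant (n + 1) where
  Fset_le := h.Fset_le_succ
  isGreatest_Dset := h.isGreatest_Dset_succ
  width_le := by
    have := h.v3_succ_eq
    have := h.v2_succ_lt
    have := h.mex_Dset_lt_succ
    omega
  Dset_separated := h.Dset_separated_succ
  Fset_separated := h.Fset_separated_succ

end Invariant

lemma invariant (n : ℕ) : Invariant n := by
  induction n with
  | zero => exact Invariant.zero
  | succ n ih => exact ih.succ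

theorem stmt6 : ∀ n : ℕ, 1 ≤ n → IsGreatest (Dset n) (v3 n - v1 n) :=
  fun n _ => (invariant n).isGreatest_Dset
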